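/- Let A = {a,b,c}, m ≥ 4, and x₁, x₂, y₁, y₂ ≥ 1 with x₁ + x₂ = y₁ + y₂ = m - 3 and y₁ = y₂ (write y for this common value, so m = 2y + 3). Assume the exact power of 2 dividing x₁+1 differs from that dividing y+1. Then the set X₂ = {a⋄^{x₁}a⋄^{x₂}a, b⋄^{m-2}b, c⋄^{m-2}c, a⋄^{m-2}b, a⋄^{m-2}c, b⋄^{y}c⋄^{y}c} is unavoidable over A. -/

import Mathlib

/-- The three-letter alphabet. -/
inductive ABC | a | b | c
deriving DecidableEq
open ABC

/-- A partial word of length `m` over alphabet `A`. -/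
abbrev PW (m : ℕ) (A : Type) := Fin m → Option A

/-- A two-sided infinite word `w` meets a partial word `u`. -/
def Meets {m : ℕ} {A : Type} (w : ℤ → A) (u : PW m A) : Prop :=
  ∃ i : ℤ, ∀ j : Fin m, ∀ x : A, u j = some x → w (i + (j : ℕ)) = x

/-- A set of partial words is unavoidable over `A`. -/
def Unavoidable {m : ℕ} {A : Type} (X : Set (PW m A)) : Prop :=
  ∀ w : ℤ → A, ∃ u ∈ X, Meets w u

/-- A set of partial words is avoidable over `A`. -/
def Avoidable {m : ℕ} {A : Type} (X : Set (PW m A)) : Prop :=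
  ∃ w : ℤ → A, ∀ u ∈ X, ¬ Meets w u

/-- The partial word `x ⋄^(m-2) y` of length `m`: first letter `x`, last letter `y`,
holes in between. -/
def oneHole {A : Type} (m : ℕ) (x y : A) : PW m A :=
  fun j => if (j : ℕ) = 0 then some x else if (j : ℕ) = m - 1 then some y else none

/-- The partial word `x ⋄^(p-1) d ⋄^(m-p-2) y` of length `m`: first letter `x`,
letter `d` at position `p`, last letter `y`, holes elsewhere. -/
def twoDef {A : Type} (m : ℕ) (x d y : A) (p : ℕ) : PW m A :=
  fun j => if (j : ℕ) = 0 then some x else if (j : ℕ) = p then some d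
    else if (j : ℕ) = m - 1 then some y else none

/-- The two-sided infinite word of period `P` repeating the block `f` (given on `[0, P)`). -/
def periodic {A : Type} (P : ℕ) (f : ℕ → A) : ℤ → A :=
  fun i => f ((i % (P : ℤ)).toNat)

lemma gdvd (p q : ℕ) (hp : 0 < p) (hq : 0 < q)
    (hv : padicValNat 2 p ≠ padicValNat 2 q) : Nat.gcd (p+q) (2*q) ∣ p := by
  rw [Nat.dvd_iff_prime_pow_dvd_dvd]
  intro ℓ k hℓp hdvd
  have h1 : ℓ ^ k ∣ p + q := hdvd.trans (Nat.gcd_dvd_left _ _)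
  have h2 : ℓ ^ k ∣ 2 * q := hdvd.trans (Nat.gcd_dvd_right _ _)
  by_cases h2' : ℓ = 2
  · subst h2'
    haveI : Fact (Nat.Prime 2) := ⟨Nat.prime_two⟩
    set α := padicValNat 2 p with hα
    set β := padicValNat 2 q with hβ
    have hkle : k ≤ α := by
      rcases lt_or_gt_of_ne hv with h | h
      · by_contra hk
        push_neg at hk
        have hsa : 2 ^ (α + 1) ∣ p + q := (pow_dvd_pow 2 hk).trans h1
        have hsq : 2 ^ (α + 1) ∣ q := (pow_dvd_pow 2 h).trans pow_padicValNat_dvd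
        have hsp : 2 ^ (α + 1) ∣ p := by
          have := Nat.dvd_sub hsa hsq
          simpa using this
        have := (padicValNat_dvd_iff_le (p := 2) hp.ne').mp hsp
        omega
      · have : k ≤ 1 + β := by
          have := (padicValNat_dvd_iff_le (p := 2) (by positivity : 2 * q ≠ 0)).mp h2
          rwa [padicValNat.mul (by norm_num) hq.ne', padicValNat.self (by norm_num)] at this
        omega
    exact (pow_dvd_pow 2 hkle).trans pow_padicValNat_dvd
  · have hco : Nat.Coprime (ℓ ^ k) 2 :=
      Nat.Coprime.pow_left k ((Nat.coprime_primes hℓp Nat.prime_two).mpr h2')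
    have hq' : ℓ ^ k ∣ q := (Nat.Coprime.dvd_of_dvd_mul_left hco h2)
    have := Nat.dvd_sub h1 hq'
    simpa using this

lemma keylem (p q : ℕ) (hp : 0 < p) (hq : 0 < q)
    (hv : padicValNat 2 p ≠ padicValNat 2 q) :
    ∃ k M : ℕ, 1 ≤ k ∧ (k : ℤ) * (p + q) = p + M * (2 * q) := by
  obtain ⟨c, hc⟩ := gdvd p q hp hq hv
  set g : ℕ := Nat.gcd (p+q) (2*q) with hg
  have hB : (g : ℤ) = (p+q : ℕ) * Int.gcdA (p+q) (2*q) + (2*q : ℕ) * Int.gcdB (p+q) (2*q) := by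
    have := Int.gcd_eq_gcd_ab ((p:ℤ)+q) (2*q)
    push_cast
    push_cast at this
    convert this using 3
    rw [hg, ← Int.gcd_natCast_natCast]; push_cast; rfl
  set A := Int.gcdA (p+q) (2*q)
  set B := Int.gcdB (p+q) (2*q)
  have hmod : ((p:ℤ)+q) * (A * c) - p = (2*q) * (-(B * c)) := by
    have hpc : (p:ℤ) = (g:ℤ) * c := by exact_mod_cast congrArg (Nat.cast : ℕ → ℤ) hc
    push_cast at hB
    calc ((p:ℤ)+q) * (A * c) - p = (((p:ℤ)+q) * A + 2*q*B) * c - p - (2*q)*(B*c) := by ring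
    _ = (g:ℤ) * c - p - (2*q)*(B*c) := by rw [← hB]
    _ = (2*q) * (-(B*c)) := by rw [← hpc]; ring
  set T : ℤ := ((A * c).natAbs : ℤ) + 1 with hT
  set k : ℤ := A * c + 2*q*T with hk
  have hq1 : (1:ℤ) ≤ 2*q := by
    have : (1:ℤ) ≤ q := by exact_mod_cast hq
    omega
  have hk1 : 1 ≤ k := by
    have h2 : -(A*c) ≤ ((A*c).natAbs : ℤ) := by
      rcases Int.natAbs_eq (A*c) with h | h <;> omega
    have h3 : T ≤ 2*q*T := by
      have hT0 : 0 < T := by positivity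
      nlinarith
    omega
  have hkey : ((p:ℤ)+q) * k - p = (2*q) * (-(B*c) + T*((p:ℤ)+q)) := by
    rw [hk]; linarith [hmod, mul_comm ((p:ℤ)+q) ((2:ℤ)*q)]
  set M : ℤ := -(B*c) + T*((p:ℤ)+q) with hM
  have hM0 : 0 ≤ M := by
    have hpos : 0 < ((p:ℤ)+q) * k - p := by
      have hpq : (0:ℤ) < (p:ℤ)+q := by positivity
      have : (p:ℤ) + q ≤ ((p:ℤ)+q) * k := le_mul_of_one_le_right hpq.le hk1
      have hq0 : (0:ℤ) < q := by exact_mod_cast hq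
      omega
    nlinarith
  refine ⟨k.toNat, M.toNat, ?_, ?_⟩
  · omega
  · rw [Int.toNat_of_nonneg (by omega : (0:ℤ) ≤ k), Int.toNat_of_nonneg hM0]
    linarith [hkey]

lemma meets_twoDef {m : ℕ} (pp : ℕ) (x d y : ABC) (w : ℤ → ABC) (i : ℤ)
    (h0 : w i = x) (hp : w (i + (pp : ℕ)) = d) (hl : w (i + ((m-1 : ℕ) : ℤ)) = y) :
    Meets w (twoDef m x d y pp) := by
  refine ⟨i, fun j z hz => ?_⟩
  unfold twoDef at hz
  split_ifs at hz with h1 h2 h3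
  · obtain rfl : x = z := by injection hz
    rw [h1]; simpa using h0
  · obtain rfl : d = z := by injection hz
    rw [h2]; exact hp
  · obtain rfl : y = z := by injection hz
    rw [h3]; exact hl

lemma meets_oneHole {m : ℕ} (x y : ABC) (w : ℤ → ABC) (i : ℤ)
    (h0 : w i = x) (hl : w (i + ((m-1 : ℕ) : ℤ)) = y) :
    Meets w (oneHole m x y) := by
  refine ⟨i, fun j z hz => ?_⟩
  unfold oneHole at hz
  split_ifs at hz with h1 h2
  · obtain rfl : x = z := by injection hz
    rw [h1]; simpa using h0
  · obtain rfl : y = z := by injection hz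
    rw [h2]; exact hl

/-- With y₁ = y₂ = y, m = 2(y+1)+1, if the exact power of 2 dividing x₁+1 differs
from that dividing y+1, then X₂ = {a⋄^(x₁)a⋄^(x₂)a, b⋄^(m-2)b, c⋄^(m-2)c,
a⋄^(m-2)b, a⋄^(m-2)c, b⋄^(y)c⋄^(y)c} is unavoidable. -/
theorem stmt_17 (m x₁ x₂ y : ℕ) (hm : 4 ≤ m)
    (hx₁ : 1 ≤ x₁) (hx₂ : 1 ≤ x₂) (hy : 1 ≤ y)
    (hsx : x₁ + x₂ = m - 3) (hmy : m = 2 * (y + 1) + 1)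
    (hpow : padicValNat 2 (x₁ + 1) ≠ padicValNat 2 (y + 1)) :
    Unavoidable ({twoDef m a a a (x₁ + 1), oneHole m b b, oneHole m c c,
                  oneHole m a b, oneHole m a c,
                  twoDef m b c c (y + 1)} : Set (PW m ABC)) := by
  intro w
  by_contra hcon
  push_neg at hcon
  have n1 := hcon (twoDef m a a a (x₁ + 1)) (by simp)
  have n2 := hcon (oneHole m b b) (by simp)
  have n3 := hcon (oneHole m c c) (by simp)
  have n4 := hcon (oneHole m a b) (by simp)
  have n5 := hcon (oneHole m a c) (by simp)
  have n6 := hcon (twoDef m b c c (y + 1)) (by simp)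
  set P : ℤ := ((x₁ + 1 : ℕ) : ℤ) with hP
  set Q : ℤ := ((y + 1 : ℕ) : ℤ) with hQ
  set D : ℤ := ((m - 1 : ℕ) : ℤ) with hD
  have hD2 : D = 2 * Q := by
    rw [hD, hQ]
    have : m - 1 = 2 * (y + 1) := by omega
    rw [this]; push_cast; ring
  have N1 : ∀ i : ℤ, w i = a → w (i + P) = a → w (i + D) = a → False :=
    fun i h1 h2 h3 => n1 (meets_twoDef (x₁+1) a a a w i h1 h2 h3)
  have N2 : ∀ i : ℤ, w i = b → w (i + D) = b → False :=
    fun i h1 h2 => n2 (meets_oneHole b b w i h1 h2)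
  have N3 : ∀ i : ℤ, w i = c → w (i + D) = c → False :=
    fun i h1 h2 => n3 (meets_oneHole c c w i h1 h2)
  have N4 : ∀ i : ℤ, w i = a → w (i + D) = b → False :=
    fun i h1 h2 => n4 (meets_oneHole a b w i h1 h2)
  have N5 : ∀ i : ℤ, w i = a → w (i + D) = c → False :=
    fun i h1 h2 => n5 (meets_oneHole a c w i h1 h2)
  have N6 : ∀ i : ℤ, w i = b → w (i + Q) = c → w (i + D) = c → False :=
    fun i h1 h2 h3 => n6 (meets_twoDef (y+1) b c c w i h1 h2 h3)
  by_cases hA : ∃ i, w i = a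
  · -- there is an `a`
    obtain ⟨i₀, hi₀⟩ := hA
    have stepA : ∀ i : ℤ, w i = a → w (i + D) = a := by
      intro i hi
      cases hval : w (i + D) with
      | a => rfl
      | b => exact absurd (N4 i hi hval) (by simp)
      | c => exact absurd (N5 i hi hval) (by simp)
    have chainA : ∀ (n : ℕ) (i : ℤ), w i = a → w (i + n * D) = a := by
      intro n
      induction n with
      | zero => intro i hi; simpa using hi
      | succ n ih =>
        intro i hi
        have e : i + (((n+1 : ℕ)) : ℤ) * D = (i + n * D) + D := by push_cast; ring
        rw [e]
        exact stepA _ (ih i hi)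
    have bc : ∀ i : ℤ, w i = a → w (i + P) = b ∨ w (i + P) = c := by
      intro i hi
      cases hval : w (i + P) with
      | a => exact absurd (N1 i hi hval (stepA i hi)) (by simp)
      | b => exact Or.inl rfl
      | c => exact Or.inr rfl
    have step2 : ∀ i : ℤ, w i = a → ∃ L : ℕ, w (i + P + Q + L * D) = a := by
      intro i hi
      -- find j ∈ {i, i+D} with w j = a and w (j+P) = b
      obtain ⟨j, hja, hjb, hjc⟩ :
          ∃ j, w j = a ∧ w (j + P) = b ∧ (j = i ∨ j = i + D) := by
        rcases bc i hi with h | h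
        · exact ⟨i, hi, h, Or.inl rfl⟩
        · refine ⟨i + D, stepA i hi, ?_, Or.inr rfl⟩
          rcases bc (i + D) (stepA i hi) with h' | h'
          · exact h'
          · exfalso
            have e : i + D + P = i + P + D := by ring
            rw [e] at h'
            exact N3 (i + P) h h'
      have hc1 : w (j + P + D) = c := by
        cases hval : w (j + P + D) with
        | a =>
          exfalso
          have e1 : j + D + P = j + P + D := by ring
          have e2 : j + D + D = j + D + D := rfl
          exact N1 (j + D) (stepA j hja) (by rw [e1]; exact hval) (stepA _ (stepA j hja))
        | b => exact absurd (N2 (j + P) hjb hval) (by simp)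
        | c => rfl
      have h6 : w (j + P + Q) ≠ c := fun hcc => N6 (j + P) hjb hcc hc1
      cases hval : w (j + P + Q) with
      | a =>
        rcases hjc with h | h
        · refine ⟨0, ?_⟩
          have e : i + P + Q + ((0:ℕ) : ℤ) * D = j + P + Q := by rw [h]; push_cast; ring
          rw [e]; exact hval
        · refine ⟨1, ?_⟩
          have e : i + P + Q + ((1:ℕ) : ℤ) * D = j + P + Q := by rw [h]; push_cast; ring
          rw [e]; exact hval
      | b =>
        have hc2 : w (j + P + Q + Q) = c := by
          have e : j + P + Q + Q = j + P + D := by rw [hD2]; ring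
          rw [e]; exact hc1
        have h6' : w (j + P + Q + D) ≠ c := fun hcc => N6 (j + P + Q) hval hc2 hcc
        have h2' : w (j + P + Q + D) ≠ b := fun hbb => N2 (j + P + Q) hval hbb
        have ha' : w (j + P + Q + D) = a := by
          cases hval2 : w (j + P + Q + D) with
          | a => rfl
          | b => exact absurd hval2 h2'
          | c => exact absurd hval2 h6'
        rcases hjc with h | h
        · refine ⟨1, ?_⟩
          have e : i + P + Q + ((1:ℕ) : ℤ) * D = j + P + Q + D := by rw [h]; push_cast; ring
          rw [e]; exact ha'
        · refine ⟨2, ?_⟩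
          have e : i + P + Q + ((2:ℕ) : ℤ) * D = j + P + Q + D := by rw [h]; push_cast; ring
          rw [e]; exact ha'
      | c => exact absurd hval h6
    -- build the chain
    have chain : ∀ n : ℕ, ∃ L : ℕ, w (i₀ + n * (P + Q) + L * D) = a := by
      intro n
      induction n with
      | zero => exact ⟨0, by simpa using hi₀⟩
      | succ n ih =>
        obtain ⟨L, hL⟩ := ih
        obtain ⟨L', hL'⟩ := step2 _ hL
        refine ⟨L + L', ?_⟩
        have e : i₀ + n * (P + Q) + L * D + P + Q + L' * D
            = i₀ + ((n : ℤ) + 1) * (P + Q) + ((L : ℤ) + L') * D := by ring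
        rw [e] at hL'
        convert hL' using 3 <;> push_cast <;> ring
    obtain ⟨k, M, hk1, hkM⟩ := keylem (x₁ + 1) (y + 1) (by omega) (by omega) hpow
    obtain ⟨L, hL⟩ := chain k
    -- k * (P + Q) = P + M * D
    have hkPQ : (k : ℤ) * (P + Q) = P + (M : ℤ) * D := by
      rw [hP, hQ, hD2, hQ]
      push_cast
      push_cast at hkM
      linarith
    have e : i₀ + (k : ℤ) * (P + Q) + (L : ℤ) * D = (i₀ + ((M : ℤ) + L) * D) + P := by
      rw [hkPQ]; ring
    rw [e] at hL
    have ecast : ((M + L : ℕ) : ℤ) = (M : ℤ) + L := by push_cast; ring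
    have ht1 : w (i₀ + ((M : ℤ) + L) * D) = a := by
      have := chainA (M + L) i₀ hi₀
      rwa [ecast] at this
    exact N1 _ ht1 hL (stepA _ ht1)
  · -- no `a` at all
    have wbc : ∀ i : ℤ, w i = b ∨ w i = c := by
      intro i
      cases hval : w i with
      | a => exact absurd ⟨i, hval⟩ hA
      | b => exact Or.inl rfl
      | c => exact Or.inr rfl
    have swapb : ∀ i : ℤ, w i = b → w (i + D) = c := by
      intro i hi
      rcases wbc (i + D) with h | h
      · exact absurd (N2 i hi h) (by simp)
      · exact h
    have swapc : ∀ i : ℤ, w i = c → w (i + D) = b := by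
      intro i hi
      rcases wbc (i + D) with h | h
      · exact h
      · exact absurd (N3 i hi h) (by simp)
    have bQ : ∀ i : ℤ, w i = b → w (i + Q) = b := by
      intro i hi
      rcases wbc (i + Q) with h | h
      · exact h
      · exact absurd (N6 i hi h (swapb i hi)) (by simp)
    have hfalse : ∀ i : ℤ, w i = b → False := by
      intro i hi
      have h1 : w (i + Q + Q) = b := bQ _ (bQ i hi)
      have e : i + Q + Q = i + D := by rw [hD2]; ring
      rw [e] at h1
      have := swapb i hi
      rw [this] at h1
      exact absurd h1 (by simp)
    rcases wbc 0 with h | h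
    · exact hfalse 0 h
    · exact hfalse _ (swapc 0 h)
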